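/- Let a > 0, 0 < m < M < ∞ and let n ≥ 1 be an integer with 2/n ≤ M − m. Then there exists a constant C > 0, depending only on n, m, M and a, such that for every D ∈ Sym3 with |D| ≥ (M+m)/2 and every E ∈ Sym3: if |D| < M − 1/n then |L(D,E)|² ≤ C (1 + |S_n(D)|)^{1+a} Q_n(D,E), and if |D| ≥ M − 1/n then |L_n(D,E)|² ≤ C (1 + |S_n(D)|)^{1+a} Q_n(D,E). -/

import Mathlib

noncomputable section

/-- Frobenius inner product on 3×3 real matrices: `A·B = Σ_{i,j} A_{ij} B_{ij}`. -/
def mdot (A B : Matrix (Fin 3) (Fin 3) ℝ) : ℝ := ∑ i, ∑ j, A i j * B i j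

/-- Frobenius norm `|A| = (A·A)^{1/2}`. -/
def mnorm (A : Matrix (Fin 3) (Fin 3) ℝ) : ℝ := Real.sqrt (mdot A A)

/-- The approximate constitutive map
`S_n(D) = (|D|−m)_+ (M^a − (min{|D|, M−1/n})^a)^{−1/a} D/|D|`, with `S_n(0) = 0`. -/
def Snmap (a m M : ℝ) (n : ℕ) (D : Matrix (Fin 3) (Fin 3) ℝ) : Matrix (Fin 3) (Fin 3) ℝ :=
  ((max (mnorm D - m) 0) * (M ^ a - (min (mnorm D) (M - 1/(n:ℝ))) ^ a) ^ (-1/a) / mnorm D) • D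

/-- `c_n = M^a − (M−1/n)^a`. -/
def cn (a M : ℝ) (n : ℕ) : ℝ := M ^ a - (M - 1/(n:ℝ)) ^ a

/-- `L(D,E) = (|D|−m)(M^a−|D|^a)^{−1/a}E/|D|
      + ((|D|−m)|D|^a + m(M^a−|D|^a))(M^a−|D|^a)^{−1−1/a}|D|^{−3}(D·E)D`. -/
def Lmap (a m M : ℝ) (D E : Matrix (Fin 3) (Fin 3) ℝ) : Matrix (Fin 3) (Fin 3) ℝ :=
  ((mnorm D - m) * (M ^ a - mnorm D ^ a) ^ (-1/a) / mnorm D) • E +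
    (((mnorm D - m) * mnorm D ^ a + m * (M ^ a - mnorm D ^ a)) *
      (M ^ a - mnorm D ^ a) ^ (-1 - 1/a) * mdot D E / mnorm D ^ 3) • D

/-- `L_n(D,E) = c_n^{−1/a}((|D|−m)E/|D| + m(D·E)D/|D|³)`. -/
def Lnmap (a m M : ℝ) (n : ℕ) (D E : Matrix (Fin 3) (Fin 3) ℝ) : Matrix (Fin 3) (Fin 3) ℝ :=
  (cn a M n ^ (-1/a)) •
    (((mnorm D - m) / mnorm D) • E + (m * mdot D E / mnorm D ^ 3) • D)

/-- `Q(D,E) = (|D|−m)(M^a−|D|^a)^{−1/a}|E|²/|D|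
      + ((|D|−m)|D|^a + m(M^a−|D|^a))(M^a−|D|^a)^{−1−1/a}|D|^{−3}(D·E)²`. -/
def Qmap (a m M : ℝ) (D E : Matrix (Fin 3) (Fin 3) ℝ) : ℝ :=
  (mnorm D - m) * (M ^ a - mnorm D ^ a) ^ (-1/a) * mnorm E ^ 2 / mnorm D +
    ((mnorm D - m) * mnorm D ^ a + m * (M ^ a - mnorm D ^ a)) *
      (M ^ a - mnorm D ^ a) ^ (-1 - 1/a) * (mdot D E) ^ 2 / mnorm D ^ 3

/-- `Q_n(D,E) = Q(D,E)` if `|D| < M−1/n`, and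
`Q_n(D,E) = c_n^{−1/a}((|D|−m)|E|²/|D| + m(D·E)²/|D|³)` if `|D| ≥ M−1/n`. -/
def Qn (a m M : ℝ) (n : ℕ) (D E : Matrix (Fin 3) (Fin 3) ℝ) : ℝ :=
  if mnorm D < M - 1/(n:ℝ) then Qmap a m M D E
  else cn a M n ^ (-1/a) *
    ((mnorm D - m) * mnorm E ^ 2 / mnorm D + m * (mdot D E) ^ 2 / mnorm D ^ 3)

/-!
Both `L` and `L_n` have the shape `(α/|D|) E + (β (D·E)/|D|³) D`, and `Q`, `Q_n` the matching
shape `α|E|²/|D| + β (D·E)²/|D|³`, with `α, β ≥ 0`. Since `|X + Y|² ≤ 2(|X|² + |Y|²)`, the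
square of the former is at most `2K` times the latter once `α, β ≤ K|D|`.

For `L_n` this holds with `K = 1` after pulling out the factor `c_n^{-1/a}`. For `L`, put
`u = (M^a - |D|^a)^{-1/a}` and `s = (|D| - m) u = |S_n(D)|`; then `α = s` and
`β = s (|D| u)^a + m u`. As `|D| - m ≥ (M - m)/2` we have `u ≤ 2s/(M - m)`, so `β` is
`O(s^{1+a} + s)` and both coefficients are `O((1 + s)^{1+a})`.
-/

open Finset

lemma mdot_self_nonneg (A : Matrix (Fin 3) (Fin 3) ℝ) : 0 ≤ mdot A A :=
  sum_nonneg fun _ _ => sum_nonneg fun _ _ => mul_self_nonneg _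

lemma mnorm_nonneg (A : Matrix (Fin 3) (Fin 3) ℝ) : 0 ≤ mnorm A := Real.sqrt_nonneg _

lemma mnorm_sq (A : Matrix (Fin 3) (Fin 3) ℝ) : mnorm A ^ 2 = mdot A A :=
  Real.sq_sqrt (mdot_self_nonneg A)

lemma mnorm_smul (x : ℝ) (A : Matrix (Fin 3) (Fin 3) ℝ) : mnorm (x • A) = |x| * mnorm A := by
  have h : mdot (x • A) (x • A) = x ^ 2 * mdot A A := by
    simp only [mdot, Matrix.smul_apply, smul_eq_mul, mul_sum]
    exact sum_congr rfl fun _ _ => sum_congr rfl fun _ _ => by ring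
  rw [mnorm, mnorm, h, Real.sqrt_mul (sq_nonneg x), Real.sqrt_sq_eq_abs]

lemma mnorm_add_sq_le (A B : Matrix (Fin 3) (Fin 3) ℝ) :
    mnorm (A + B) ^ 2 ≤ 2 * (mnorm A ^ 2 + mnorm B ^ 2) := by
  simp only [mnorm_sq, mdot, Matrix.add_apply, mul_sum, ← sum_add_distrib]
  refine sum_le_sum fun i _ => sum_le_sum fun j _ => ?_
  nlinarith [sq_nonneg (A i j - B i j)]

def Lform (α β : ℝ) (D E : Matrix (Fin 3) (Fin 3) ℝ) : Matrix (Fin 3) (Fin 3) ℝ :=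
  (α / mnorm D) • E + (β * mdot D E / mnorm D ^ 3) • D

def Qform (α β : ℝ) (D E : Matrix (Fin 3) (Fin 3) ℝ) : ℝ :=
  α * mnorm E ^ 2 / mnorm D + β * mdot D E ^ 2 / mnorm D ^ 3

section Form

variable {α β : ℝ} {D : Matrix (Fin 3) (Fin 3) ℝ}

lemma Qform_nonneg (hα : 0 ≤ α) (hβ : 0 ≤ β) (E : Matrix (Fin 3) (Fin 3) ℝ) :
    0 ≤ Qform α β D E := by
  have := mnorm_nonneg D
  unfold Qform
  positivity

lemma mnorm_Lform_sq_le {K : ℝ} (hD : 0 < mnorm D) (hα : 0 ≤ α) (hβ : 0 ≤ β)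
    (hαK : α ≤ K * mnorm D) (hβK : β ≤ K * mnorm D) (E : Matrix (Fin 3) (Fin 3) ℝ) :
    mnorm (Lform α β D E) ^ 2 ≤ 2 * K * Qform α β D E := by
  have hαd : α / mnorm D ≤ K := (div_le_iff₀ hD).2 hαK
  have hβd : β / mnorm D ≤ K := (div_le_iff₀ hD).2 hβK
  calc mnorm (Lform α β D E) ^ 2
      ≤ 2 * (mnorm ((α / mnorm D) • E) ^ 2 +
          mnorm ((β * mdot D E / mnorm D ^ 3) • D) ^ 2) :=
        mnorm_add_sq_le _ _
    _ = 2 * (α / mnorm D * (α * mnorm E ^ 2 / mnorm D) +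
          β / mnorm D * (β * mdot D E ^ 2 / mnorm D ^ 3)) := by
        rw [mnorm_smul, mnorm_smul, mul_pow, mul_pow, sq_abs, sq_abs]
        field_simp
    _ ≤ 2 * (K * (α * mnorm E ^ 2 / mnorm D) + K * (β * mdot D E ^ 2 / mnorm D ^ 3)) := by
        gcongr
    _ = 2 * K * Qform α β D E := by
        unfold Qform
        ring

end Form

lemma le_one_add_rpow {s p : ℝ} (hs : 0 ≤ s) (hp : 1 ≤ p) : s ≤ (1 + s) ^ p :=
  (by linarith : s ≤ 1 + s).trans (Real.self_le_rpow_of_one_le (by linarith) hp)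

section Lmap

variable {a m M : ℝ}

def Lconst (a m M : ℝ) : ℝ := (2 * M / (M - m)) ^ a + 2 * m / (M - m)

lemma Lconst_nonneg (hm : 0 ≤ m) (hmM : m < M) : 0 ≤ Lconst a m M := by
  have hMm : 0 < M - m := sub_pos.2 hmM
  exact add_nonneg (Real.rpow_nonneg (div_nonneg (by linarith) hMm.le) a)
    (div_nonneg (by linarith) hMm.le)

lemma Lmap_coeff_le {d : ℝ} (ha : 0 < a) (hm : 0 < m) (hd : (M + m) / 2 ≤ d) (hdM : d < M) :
    ((d - m) * d ^ a + m * (M ^ a - d ^ a)) * (M ^ a - d ^ a) ^ (-1 - 1 / a) ≤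
      Lconst a m M * (1 + (d - m) * (M ^ a - d ^ a) ^ (-1 / a)) ^ (1 + a) := by
  have hd0 : 0 < d := by linarith
  have hg : 0 < M ^ a - d ^ a := sub_pos.2 (Real.rpow_lt_rpow hd0.le hdM ha)
  set g := M ^ a - d ^ a
  set u := g ^ (-1 / a)
  set s := (d - m) * u
  set q := 2 / (M - m)
  have hu : 0 < u := Real.rpow_pos_of_pos hg _
  have hs : 0 < s := mul_pos (by linarith) hu
  have hq : 0 < q := div_pos two_pos (by linarith)
  have hMq : 0 < M * q := mul_pos (by linarith) hq
  have hMqa : 0 ≤ (M * q) ^ a := Real.rpow_nonneg hMq.le a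
  have huq : u ≤ q * s := by
    rw [div_mul_eq_mul_div, le_div_iff₀ (by linarith)]
    nlinarith
  have hginv : g⁻¹ = u ^ a := by
    rw [← Real.rpow_mul hg.le, div_mul_cancel₀ _ ha.ne', Real.rpow_neg_one]
  have hsplit : g ^ (-1 - 1 / a) = g⁻¹ * u := by
    rw [sub_eq_add_neg, Real.rpow_add hg, Real.rpow_neg_one, ← neg_div]
  have hdu : (d * u) ^ a ≤ (M * q) ^ a * s ^ a := by
    rw [← Real.mul_rpow hMq.le hs.le, mul_assoc]
    gcongr
    linarith
  have hsT : s ^ (1 + a) ≤ (1 + s) ^ (1 + a) := by gcongr; linarith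
  have hsT' : s ≤ (1 + s) ^ (1 + a) := le_one_add_rpow hs.le (by linarith)
  calc ((d - m) * d ^ a + m * g) * g ^ (-1 - 1 / a) = s * (d * u) ^ a + m * u := by
        rw [hsplit, Real.mul_rpow hd0.le hu.le, ← hginv]
        field_simp
        ring
    _ ≤ s * ((M * q) ^ a * s ^ a) + m * (q * s) := by gcongr
    _ = (M * q) ^ a * s ^ (1 + a) + m * q * s := by
        rw [Real.rpow_add hs, Real.rpow_one]
        ring
    _ ≤ (M * q) ^ a * (1 + s) ^ (1 + a) + m * q * (1 + s) ^ (1 + a) := by gcongr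
    _ = Lconst a m M * (1 + s) ^ (1 + a) := by
        rw [Lconst, show M * q = 2 * M / (M - m) by ring]
        ring

lemma mnorm_Lmap_sq_le {K : ℝ} {D : Matrix (Fin 3) (Fin 3) ℝ} (ha : 0 < a) (hm : 0 < m)
    (hD : (M + m) / 2 ≤ mnorm D) (hDM : mnorm D < M) (hK : (Lconst a m M + 1) / m ≤ K)
    (E : Matrix (Fin 3) (Fin 3) ℝ) :
    mnorm (Lmap a m M D E) ^ 2 ≤
      2 * K * (1 + (mnorm D - m) * (M ^ a - mnorm D ^ a) ^ (-1 / a)) ^ (1 + a) *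
        Qmap a m M D E := by
  set d := mnorm D
  have hmd : m < d := by linarith
  have hd0 : 0 < d := hm.trans hmd
  have hg : 0 < M ^ a - d ^ a := sub_pos.2 (Real.rpow_lt_rpow hd0.le hDM ha)
  set α := (d - m) * (M ^ a - d ^ a) ^ (-1 / a)
  set β := ((d - m) * d ^ a + m * (M ^ a - d ^ a)) * (M ^ a - d ^ a) ^ (-1 - 1 / a)
  set T := (1 + α) ^ (1 + a)
  have hα : 0 ≤ α := mul_nonneg (by linarith) (Real.rpow_nonneg hg.le _)
  have hβ : 0 ≤ β := by
    have := Real.rpow_nonneg hd0.le a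
    have := sub_pos.2 hmd
    positivity
  have hT : 0 ≤ T := Real.rpow_nonneg (by linarith) _
  have hL : 0 ≤ Lconst a m M := Lconst_nonneg hm.le (by linarith)
  have hbound : ∀ x, x ≤ (Lconst a m M + 1) * T → x ≤ K * T * d := fun x hx =>
    hx.trans <| calc
      (Lconst a m M + 1) * T = (Lconst a m M + 1) / m * T * m := by field_simp
      _ ≤ K * T * d := by
        have hL' : 0 ≤ (Lconst a m M + 1) / m := div_nonneg (by linarith) hm.le
        exact mul_le_mul (mul_le_mul_of_nonneg_right hK hT) hmd.le hm.le
          (mul_nonneg (hL'.trans hK) hT)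
  have hαK : α ≤ K * T * d := hbound α <| by
    nlinarith [le_one_add_rpow hα (by linarith : 1 ≤ 1 + a), mul_nonneg hL hT]
  have hβK : β ≤ K * T * d := hbound β <| by
    nlinarith [Lmap_coeff_le ha hm hD hDM]
  calc mnorm (Lmap a m M D E) ^ 2 = mnorm (Lform α β D E) ^ 2 := rfl
    _ ≤ 2 * (K * T) * Qform α β D E := mnorm_Lform_sq_le hd0 hα hβ hαK hβK E
    _ = 2 * K * T * Qmap a m M D E := by
      rw [show Qform α β D E = Qmap a m M D E from rfl]
      ring

end Lmap

section Approximation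

variable {a m M : ℝ} {n : ℕ} {D : Matrix (Fin 3) (Fin 3) ℝ}

lemma cn_nonneg (ha : 0 ≤ a) (hMn : 0 ≤ M - 1 / (n : ℝ)) : 0 ≤ cn a M n := by
  have : 0 ≤ 1 / (n : ℝ) := by positivity
  exact sub_nonneg.2 (Real.rpow_le_rpow hMn (by linarith) ha)

lemma Qn_nonneg_of_le (hc : 0 ≤ cn a M n) (hm : 0 ≤ m) (hmD : m ≤ mnorm D)
    (hge : M - 1 / (n : ℝ) ≤ mnorm D) (E : Matrix (Fin 3) (Fin 3) ℝ) :
    0 ≤ Qn a m M n D E := by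
  rw [Qn, if_neg hge.not_gt]
  exact mul_nonneg (Real.rpow_nonneg hc _) (Qform_nonneg (sub_nonneg.2 hmD) hm E)

lemma mnorm_Lnmap_sq_le (hm : 0 ≤ m) (hmD : m ≤ mnorm D) (hD : 0 < mnorm D)
    (hge : M - 1 / (n : ℝ) ≤ mnorm D) (E : Matrix (Fin 3) (Fin 3) ℝ) :
    mnorm (Lnmap a m M n D E) ^ 2 ≤ 2 * cn a M n ^ (-1 / a) * Qn a m M n D E := by
  set κ := cn a M n ^ (-1 / a)
  have hQn : Qn a m M n D E = κ * Qform (mnorm D - m) m D E := if_neg hge.not_gt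
  have hLform : mnorm (Lform (mnorm D - m) m D E) ^ 2 ≤ 2 * 1 * Qform (mnorm D - m) m D E :=
    mnorm_Lform_sq_le hD (sub_nonneg.2 hmD) hm (by linarith) (by linarith) E
  calc mnorm (Lnmap a m M n D E) ^ 2 = κ ^ 2 * mnorm (Lform (mnorm D - m) m D E) ^ 2 := by
        rw [show Lnmap a m M n D E = κ • Lform (mnorm D - m) m D E from rfl, mnorm_smul, mul_pow,
          sq_abs]
    _ ≤ κ ^ 2 * (2 * 1 * Qform (mnorm D - m) m D E) := by gcongr
    _ = 2 * κ * Qn a m M n D E := by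
        rw [hQn]
        ring

lemma mnorm_Snmap_of_lt (ha : 0 ≤ a) (hm : 0 ≤ m) (hmD : m < mnorm D)
    (hlt : mnorm D < M - 1 / (n : ℝ)) :
    mnorm (Snmap a m M n D) = (mnorm D - m) * (M ^ a - mnorm D ^ a) ^ (-1 / a) := by
  have hD : 0 < mnorm D := hm.trans_lt hmD
  have hDM : mnorm D ≤ M := hlt.le.trans (sub_le_self _ (by positivity))
  have hg : 0 ≤ M ^ a - mnorm D ^ a := sub_nonneg.2 (Real.rpow_le_rpow hD.le hDM ha)
  rw [Snmap, min_eq_left hlt.le, max_eq_left (by linarith), mnorm_smul,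
    abs_of_nonneg (by have := Real.rpow_nonneg hg (-1 / a); have := sub_pos.2 hmD; positivity),
    div_mul_cancel₀ _ hD.ne']

end Approximation

theorem Snmap_derivative_estimate_general (a m M : ℝ) (ha : 0 < a) (hm : 0 < m) (hmM : m < M)
    (n : ℕ) (hmn : 2/(n:ℝ) ≤ M - m) :
    ∃ C : ℝ, 0 < C ∧ ∀ D E : Matrix (Fin 3) (Fin 3) ℝ, D.IsSymm → E.IsSymm →
      (M + m)/2 ≤ mnorm D →
      (mnorm D < M - 1/(n:ℝ) →
        mnorm (Lmap a m M D E) ^ 2 ≤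
          C * (1 + mnorm (Snmap a m M n D)) ^ (1 + a) * Qn a m M n D E) ∧
      (M - 1/(n:ℝ) ≤ mnorm D →
        mnorm (Lnmap a m M n D E) ^ 2 ≤
          C * (1 + mnorm (Snmap a m M n D)) ^ (1 + a) * Qn a m M n D E) := by
  have hinv : 0 ≤ 1 / (n : ℝ) := by positivity
  have hMn : 0 ≤ M - 1 / (n : ℝ) := by
    have : 1 / (n : ℝ) ≤ 2 / n := div_le_div_of_nonneg_right (by norm_num) n.cast_nonneg
    linarith
  have hc : 0 ≤ cn a M n := cn_nonneg ha.le hMn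
  set κ := cn a M n ^ (-1 / a)
  have hκ : 0 ≤ κ := Real.rpow_nonneg hc _
  set K := (Lconst a m M + 1) / m
  have hK : 0 < K := div_pos (by linarith [Lconst_nonneg (a := a) hm.le hmM]) hm
  refine ⟨2 * (K + κ), by linarith, fun D E _ _ hD => ⟨fun hlt => ?_, fun hge => ?_⟩⟩
  · rw [Qn, if_pos hlt, mnorm_Snmap_of_lt ha.le hm.le (by linarith) hlt]
    exact mnorm_Lmap_sq_le ha hm hD (by linarith) (le_add_of_nonneg_right hκ) E
  · have hT : 1 ≤ (1 + mnorm (Snmap a m M n D)) ^ (1 + a) :=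
      Real.one_le_rpow (by linarith [mnorm_nonneg (Snmap a m M n D)]) (by linarith)
    have hκC : 2 * κ ≤ 2 * (K + κ) * (1 + mnorm (Snmap a m M n D)) ^ (1 + a) :=
      (by linarith : 2 * κ ≤ 2 * (K + κ)).trans (le_mul_of_one_le_right (by linarith) hT)
    exact (mnorm_Lnmap_sq_le hm.le (by linarith) (by linarith) hge E).trans
      (mul_le_mul_of_nonneg_right hκC (Qn_nonneg_of_le hc hm.le (by linarith) hge E))

/-- For `2/n ≤ M − m` there is `C = C(n,m,M,a) > 0` such that for all symmetric `D, E`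
with `|D| ≥ (M+m)/2`: if `|D| < M − 1/n` then
`|L(D,E)|² ≤ C (1 + |S_n(D)|)^{1+a} Q_n(D,E)`, and if `|D| ≥ M − 1/n` then
`|L_n(D,E)|² ≤ C (1 + |S_n(D)|)^{1+a} Q_n(D,E)`. -/
theorem Snmap_derivative_estimate (a m M : ℝ) (ha : 0 < a) (hm : 0 < m) (hmM : m < M)
    (n : ℕ) (hn : 1 ≤ n) (hmn : 2/(n:ℝ) ≤ M - m) :
    ∃ C : ℝ, 0 < C ∧ ∀ D E : Matrix (Fin 3) (Fin 3) ℝ, D.IsSymm → E.IsSymm →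
      (M + m)/2 ≤ mnorm D →
      (mnorm D < M - 1/(n:ℝ) →
        mnorm (Lmap a m M D E) ^ 2 ≤
          C * (1 + mnorm (Snmap a m M n D)) ^ (1 + a) * Qn a m M n D E) ∧
      (M - 1/(n:ℝ) ≤ mnorm D →
        mnorm (Lnmap a m M n D E) ^ 2 ≤
          C * (1 + mnorm (Snmap a m M n D)) ^ (1 + a) * Qn a m M n D E) :=
  Snmap_derivative_estimate_general a m M ha hm hmM n hmn
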